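/- arXiv:2503.15015 — 3 statements merged into one kernel-verified Lean document; each statement's English description precedes it below -/
import Mathlib

section
/- The exponential mechanism is ε-differentially private: let X be a type of datasets with adjacency relation adj, Θ a nonempty finite candidate set, u : X → Θ → ℝ a utility function, and Δ > 0 a bound with |u D θ − u D' θ| ≤ Δ for all adjacent D, D' and all θ ∈ Θ. Define the mechanism E : X → PMF Θ that outputs θ with probability exp(ε * u D θ / (2Δ)) / Σ_{θ' ∈ Θ} exp(ε * u D θ' / (2Δ)). Then for all adjacent D, D' and every θ ∈ Θ, (E D) θ ≤ exp ε * (E D') θ; consequently E satisfies ε-DP. -/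
open MeasureTheory Real

/-- The exponential mechanism is ε-differentially private: if the utility function
`u` has sensitivity at most `Δ` on adjacent datasets, then the mechanism that outputs
candidate `θ` with probability `exp (ε * u D θ / (2Δ)) / ∑ θ', exp (ε * u D θ' / (2Δ))`
satisfies pointwise ε-DP, and consequently the set-based ε-DP guarantee. -/
theorem exponential_mechanism_is_DP
    {X Θ : Type*} [Fintype Θ] [Nonempty Θ]
    [MeasurableSpace Θ] [MeasurableSingletonClass Θ]
    (adj : X → X → Prop) (u : X → Θ → ℝ) (Δ ε : ℝ)
    (hΔ : 0 < Δ) (hε : 0 ≤ ε)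
    (hsens : ∀ D D', adj D D' → ∀ θ : Θ, |u D θ - u D' θ| ≤ Δ)
    (E : X → PMF Θ)
    (hE : ∀ D (θ : Θ), (E D) θ =
      ENNReal.ofReal (Real.exp (ε * u D θ / (2 * Δ)) /
        ∑ θ' : Θ, Real.exp (ε * u D θ' / (2 * Δ)))) :
    ∀ D D', adj D D' →
      (∀ θ : Θ, (E D) θ ≤ ENNReal.ofReal (Real.exp ε) * (E D') θ) ∧
      (∀ S : Set Θ,
        (E D).toMeasure S ≤ ENNReal.ofReal (Real.exp ε) * (E D').toMeasure S) := by
  intro D D' hadj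
  have hΔ2 : (0:ℝ) < 2 * Δ := by linarith
  have hee : Real.exp (ε/2) * Real.exp (ε/2) = Real.exp ε := by
    rw [← Real.exp_add]; norm_num
  have hexp : ∀ θ : Θ, Real.exp (ε * u D θ / (2 * Δ)) ≤
      Real.exp (ε / 2) * Real.exp (ε * u D' θ / (2 * Δ)):= by
    intro θ
    rw [← Real.exp_add, Real.exp_le_exp, div_le_iff₀ hΔ2, add_mul,
      div_mul_cancel₀ _ (ne_of_gt hΔ2)]
    have h1 : u D θ - u D' θ ≤ Δ := (abs_le.1 (hsens D D' hadj θ)).2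
    nlinarith [mul_le_mul_of_nonneg_left h1 hε]
  have hexp' : ∀ θ : Θ, Real.exp (ε * u D' θ / (2 * Δ)) ≤
      Real.exp (ε / 2) * Real.exp (ε * u D θ / (2 * Δ)) := by
    intro θ
    rw [← Real.exp_add, Real.exp_le_exp, div_le_iff₀ hΔ2, add_mul,
      div_mul_cancel₀ _ (ne_of_gt hΔ2)]
    have h1 : u D' θ - u D θ ≤ Δ := by
      have := (abs_le.1 (hsens D D' hadj θ)).1; linarith
    nlinarith [mul_le_mul_of_nonneg_left h1 hε]
  set sD := ∑ θ' : Θ, Real.exp (ε * u D θ' / (2 * Δ)) with hsD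
  set sD' := ∑ θ' : Θ, Real.exp (ε * u D' θ' / (2 * Δ)) with hsD'
  have hsDpos : 0 < sD := Finset.sum_pos (fun θ _ => Real.exp_pos _) Finset.univ_nonempty
  have hsD'pos : 0 < sD' := Finset.sum_pos (fun θ _ => Real.exp_pos _) Finset.univ_nonempty
  have hsum : sD' ≤ Real.exp (ε / 2) * sD := by
    rw [Finset.mul_sum]
    exact Finset.sum_le_sum fun θ _ => hexp' θ
  have hpt : ∀ θ : Θ, (E D) θ ≤ ENNReal.ofReal (Real.exp ε) * (E D') θ := by
    intro θ
    rw [hE D θ, hE D' θ, ← ENNReal.ofReal_mul (Real.exp_nonneg _)]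
    apply ENNReal.ofReal_le_ofReal
    rw [← mul_div_assoc, div_le_div_iff₀ hsDpos hsD'pos]
    calc Real.exp (ε * u D θ / (2 * Δ)) * sD'
        ≤ (Real.exp (ε / 2) * Real.exp (ε * u D' θ / (2 * Δ))) *
          (Real.exp (ε / 2) * sD) := by
          apply mul_le_mul (hexp θ) hsum (le_of_lt hsD'pos)
          positivity
      _ = Real.exp ε * Real.exp (ε * u D' θ / (2 * Δ)) * sD := by
          rw [← hee]; ring
  refine ⟨hpt, fun S => ?_⟩
  have hmeas : MeasurableSet S := (Set.to_countable S).measurableSet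
  rw [PMF.toMeasure_apply _ hmeas, PMF.toMeasure_apply _ hmeas, ← ENNReal.tsum_mul_left]
  apply ENNReal.tsum_le_tsum
  intro θ
  by_cases h : θ ∈ S
  · simp only [Set.indicator_of_mem h]
    exact hpt θ
  · simp [Set.indicator_of_notMem h]
end

section
/- The Laplace mechanism is ε-differentially private: let Δ > 0, ε > 0, b = Δ/ε, and for a ∈ ℝ let μ_a be the measure on ℝ with density y ↦ (1/(2b)) * exp(−|y − a|/b) with respect to Lebesgue measure (i.e., μ_a = volume.withDensity of the shifted Laplace density). Then for all a, a' ∈ ℝ with |a − a'| ≤ Δ and every measurable set S ⊆ ℝ, μ_a S ≤ exp ε * μ_{a'} S. -/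
open MeasureTheory Real

/-- The Laplace mechanism is ε-differentially private: letting `μ a` be the measure
on `ℝ` with density `y ↦ (1/(2b)) * exp (-|y - a| / b)` (scale `b = Δ/ε`) with respect
to Lebesgue measure, for any two centers `a, a'` with `|a - a'| ≤ Δ` and any
measurable set `S`, `μ a S ≤ exp ε * μ a' S`. -/
theorem laplace_mechanism_is_DP
    (Δ ε : ℝ) (hΔ : 0 < Δ) (hε : 0 < ε) (b : ℝ) (hb : b = Δ / ε)
    (μ : ℝ → Measure ℝ)
    (hμ : ∀ a : ℝ, μ a = volume.withDensity
      (fun y => ENNReal.ofReal ((1 / (2 * b)) * Real.exp (-|y - a| / b)))) :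
    ∀ a a' : ℝ, |a - a'| ≤ Δ → ∀ S : Set ℝ, MeasurableSet S →
      μ a S ≤ ENNReal.ofReal (Real.exp ε) * μ a' S := by
  intro a a' hd S hS
  have hbpos : 0 < b := by rw [hb]; positivity
  rw [hμ a, hμ a', withDensity_apply _ hS, withDensity_apply _ hS,
    ← lintegral_const_mul' _ _ ENNReal.ofReal_ne_top]
  refine setLIntegral_mono' hS (fun y _ => ?_)
  rw [← ENNReal.ofReal_mul (Real.exp_nonneg _)]
  refine ENNReal.ofReal_le_ofReal ?_
  rw [← mul_assoc, mul_comm (Real.exp ε), mul_assoc]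
  refine mul_le_mul_of_nonneg_left ?_ (by positivity)
  rw [← Real.exp_add]
  refine Real.exp_le_exp.mpr ?_
  have h1 : |y - a'| - Δ ≤ |y - a| := by
    have := abs_sub_abs_le_abs_sub (y - a') (y - a)
    have h2 : (y - a') - (y - a) = a - a' := by ring
    rw [h2] at this; linarith
  have hεb : ε = Δ / b := by
    rw [hb]; field_simp
  rw [hεb, ← add_div, div_le_div_iff₀ hbpos hbpos]
  nlinarith [hbpos]
end

section
/- Adaptive sequential composition of discrete differentially private mechanisms: let X be a type of datasets with adjacency relation adj, and Ω₁, Ω₂ countable output types. Suppose A : X → PMF Ω₁ satisfies pointwise ε₁-DP (for all adjacent D, D' and all ω₁, (A D) ω₁ ≤ exp ε₁ * (A D') ω₁), and B : X → Ω₁ → PMF Ω₂ is such that for every fixed ω₁, the mechanism D ↦ B D ω₁ satisfies pointwise ε₂-DP. Then the composed mechanism D ↦ (A D).bind (fun ω₁ => (B D ω₁).map (fun ω₂ => (ω₁, ω₂))) satisfies pointwise (ε₁ + ε₂)-DP on Ω₁ × Ω₂. -/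
open Real

lemma bind_map_prod_apply {Ω₁ Ω₂ : Type*} (A : PMF Ω₁) (B : Ω₁ → PMF Ω₂) (p : Ω₁ × Ω₂) :
    (A.bind (fun ω₁ => (B ω₁).map (fun ω₂ => (ω₁, ω₂)))) p = A p.1 * B p.1 p.2 := by
  classical
  obtain ⟨a, b⟩ := p
  rw [PMF.bind_apply]
  have h : ∀ ω₁, A ω₁ * ((B ω₁).map (fun ω₂ => (ω₁, ω₂))) (a, b)
      = if ω₁ = a then A a * B a b else 0 := by
    intro ω₁
    by_cases hω : ω₁ = a
    · subst hω
      simp only [if_pos rfl, PMF.map_apply]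
      congr 1
      rw [tsum_eq_single b]
      · simp
      · intro c hc; simp [Prod.ext_iff, Ne.symm hc]
    · simp only [if_neg hω, PMF.map_apply]
      convert mul_zero (A ω₁)
      apply ENNReal.summable.tsum_eq_zero_iff |>.mpr
      intro c; simp [Prod.ext_iff, Ne.symm hω]
  simp only [h]
  rw [tsum_eq_single a]
  · simp
  · intro b' hb'; simp [hb']

/-- Adaptive sequential composition of discrete differentially private mechanisms:
if `A` satisfies pointwise ε₁-DP and, for every fixed first output `ω₁`, the mechanism
`D ↦ B D ω₁` satisfies pointwise ε₂-DP, then the composed mechanism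
`D ↦ (A D).bind (fun ω₁ => (B D ω₁).map (fun ω₂ => (ω₁, ω₂)))`
satisfies pointwise (ε₁ + ε₂)-DP. -/
theorem adaptive_composition_pointwise_DP
    {X Ω₁ Ω₂ : Type*} [Countable Ω₁] [Countable Ω₂]
    (adj : X → X → Prop) (ε₁ ε₂ : ℝ)
    (A : X → PMF Ω₁) (B : X → Ω₁ → PMF Ω₂)
    (hA : ∀ D D', adj D D' → ∀ ω₁ : Ω₁,
      (A D) ω₁ ≤ ENNReal.ofReal (Real.exp ε₁) * (A D') ω₁)
    (hB : ∀ ω₁ : Ω₁, ∀ D D', adj D D' → ∀ ω₂ : Ω₂,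
      (B D ω₁) ω₂ ≤ ENNReal.ofReal (Real.exp ε₂) * (B D' ω₁) ω₂) :
    ∀ D D', adj D D' → ∀ p : Ω₁ × Ω₂,
      ((A D).bind (fun ω₁ => (B D ω₁).map (fun ω₂ => (ω₁, ω₂)))) p ≤
        ENNReal.ofReal (Real.exp (ε₁ + ε₂)) *
          ((A D').bind (fun ω₁ => (B D' ω₁).map (fun ω₂ => (ω₁, ω₂)))) p := by
  intro D D' h p
  rw [bind_map_prod_apply, bind_map_prod_apply, Real.exp_add,
    ENNReal.ofReal_mul (Real.exp_pos ε₁).le]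
  calc A D p.1 * B D p.1 p.2
      ≤ (ENNReal.ofReal (Real.exp ε₁) * A D' p.1) *
        (ENNReal.ofReal (Real.exp ε₂) * B D' p.1 p.2) :=
        mul_le_mul' (hA D D' h p.1) (hB p.1 D D' h p.2)
    _ = ENNReal.ofReal (Real.exp ε₁) * ENNReal.ofReal (Real.exp ε₂) *
        (A D' p.1 * B D' p.1 p.2) := by ring
end
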